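/- Define β(x,t) = (1/L(t))·arccos(cosh(x·L(t))/cosh(L(t))) with L(t) = (1/2)·arcosh((1+8t²+21t⁴-2t⁶)/(2t²(1+t²)²)). For t₁, t₂ ∈ (0,1) with t₂ > t₁, and for all x ∈ (0,1), one has 0 < β(x,t₂) - β(x,t₁) < β(0,t₂) - β(0,t₁). -/

import Mathlib

/-!
Write `β x t = betaL x (L t)` with `betaL x ℓ = arccos (cosh (x ℓ) / cosh ℓ) / ℓ`; `L` is positive
and strictly decreasing on `(0, 1)` because `cosh (2 L t)` is a rational function of `t²` that
decreases there. So it suffices to study `betaL` for `0 < ℓ₂ < ℓ₁`.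

For `θ = arccos (cosh (x ℓ) / cosh ℓ)`, `∂ℓ betaL = (ℓ ∂ℓθ - θ) / ℓ²`, and `ℓ ∂ℓθ ≤ sin θ < θ`,
the first inequality being `ℓ cosh (xℓ) sinh ℓ - xℓ sinh (xℓ) cosh ℓ ≤ sinh² ℓ - sinh² (xℓ)`.
Hence `betaL x` is strictly decreasing in `ℓ`, which is the positivity of the increment.

Next, `∂ₓ betaL = -sinh (xℓ) / √(sinh² ℓ - sinh² (xℓ))`, which is increasing in `ℓ` because
`sinh ℓ / sinh (xℓ)` is (equivalently, `tanh y / y` decreases). Therefore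
`x ↦ betaL x ℓ₂ - betaL x ℓ₁` is strictly decreasing on `[0, 1]`, which is the upper bound.
-/

noncomputable def arcosh (x : ℝ) : ℝ := Real.log (x + Real.sqrt (x^2 - 1))

noncomputable def L (t : ℝ) : ℝ :=
  (1/2) * arcosh ((1 + 8*t^2 + 21*t^4 - 2*t^6) / (2*t^2*(1+t^2)^2))

noncomputable def β (x t : ℝ) : ℝ :=
  (1 / L t) * Real.arccos (Real.cosh (x * L t) / Real.cosh (L t))

open Real Set

lemma sinh_lt_mul_cosh {x : ℝ} (hx : 0 < x) : sinh x < x * cosh x := by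
  have hderiv (y : ℝ) : HasDerivAt (fun y => y * cosh y - sinh y) (y * sinh y) y :=
    (((hasDerivAt_id' y).mul (hasDerivAt_cosh y)).sub (hasDerivAt_sinh y)).congr_deriv
      (by ring)
  have hmono : StrictMonoOn (fun y => y * cosh y - sinh y) (Ici 0) :=
    strictMonoOn_of_hasDerivWithinAt_pos (convex_Ici 0)
      (fun y _ => (hderiv y).continuousAt.continuousWithinAt)
      (fun y _ => (hderiv y).hasDerivWithinAt)
      (fun y hy => by
        rw [interior_Ici, mem_Ioi] at hy
        exact mul_pos hy (sinh_pos_iff.2 hy))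
  have := hmono self_mem_Ici hx.le hx
  simp only [zero_mul, sinh_zero, sub_zero] at this
  linarith

lemma mul_sinh_mul_cosh_lt {a b : ℝ} (ha : 0 < a) (hab : a < b) :
    a * sinh b * cosh a < b * sinh a * cosh b := by
  have hd : 0 < b - a := sub_pos.2 hab
  have hsinh_d : sinh (b - a) < (b - a) * cosh b :=
    (sinh_lt_mul_cosh hd).trans_le <| mul_le_mul_of_nonneg_left
      (cosh_le_cosh.2 (by rw [abs_of_pos hd, abs_of_pos (ha.trans hab)]; linarith)) hd.le
  have key : a * sinh (b - a) < sinh a * ((b - a) * cosh b) :=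
    calc a * sinh (b - a) < sinh a * sinh (b - a) :=
          mul_lt_mul_of_pos_right (self_lt_sinh_iff.2 ha) (sinh_pos_iff.2 hd)
      _ < sinh a * ((b - a) * cosh b) := mul_lt_mul_of_pos_left hsinh_d (sinh_pos_iff.2 ha)
  rw [sinh_sub] at key
  linarith

lemma mul_cosh_mul_sinh_sub_le {a b : ℝ} (ha : 0 ≤ a) (hab : a ≤ b) :
    b * cosh a * sinh b - a * sinh a * cosh b ≤ sinh b ^ 2 - sinh a ^ 2 := by
  have hd : 0 ≤ b - a := sub_nonneg.2 hab
  have hs : 0 ≤ b + a := by linarith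
  calc b * cosh a * sinh b - a * sinh a * cosh b
        = (b + a) / 2 * sinh (b - a) + (b - a) / 2 * sinh (b + a) := by
          rw [sinh_sub, sinh_add]; ring
    _ ≤ sinh (b + a) / 2 * sinh (b - a) + sinh (b - a) / 2 * sinh (b + a) := by
          have := sinh_nonneg_iff.2 hd
          have := sinh_nonneg_iff.2 hs
          have := self_le_sinh_iff.2 hd
          have := self_le_sinh_iff.2 hs
          gcongr
    _ = sinh b ^ 2 - sinh a ^ 2 := by
          rw [sinh_sub, sinh_add]
          linear_combination sinh b ^ 2 * cosh_sq a - sinh a ^ 2 * cosh_sq b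

lemma sinh_sq_sub_sinh_sq_pos {a b : ℝ} (h : |a| < |b|) : 0 < sinh b ^ 2 - sinh a ^ 2 := by
  have hlt := cosh_lt_cosh.2 h
  have := cosh_pos a
  nlinarith [cosh_sq a, cosh_sq b]

lemma sqrt_one_sub_sq_cosh_div_cosh (a b : ℝ) :
    √(1 - (cosh a / cosh b) ^ 2) = √(sinh b ^ 2 - sinh a ^ 2) / cosh b := by
  have hb := cosh_pos b
  have : 1 - (cosh a / cosh b) ^ 2 = (sinh b ^ 2 - sinh a ^ 2) / cosh b ^ 2 := by
    field_simp
    linear_combination cosh_sq b - cosh_sq a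
  rw [this, sqrt_div' _ (sq_nonneg _), sqrt_sq hb.le]

theorem hasDerivAt_arccos_cosh_div_cosh {f g : ℝ → ℝ} {f' g' y : ℝ} (hf : HasDerivAt f f' y)
    (hg : HasDerivAt g g' y) (hfg : |f y| < |g y|) :
    HasDerivAt (fun y => arccos (cosh (f y) / cosh (g y)))
      ((cosh (f y) * sinh (g y) * g' - sinh (f y) * cosh (g y) * f') /
        (cosh (g y) * √(sinh (g y) ^ 2 - sinh (f y) ^ 2))) y := by
  have hcg := cosh_pos (g y)
  have hc0 : 0 < cosh (f y) / cosh (g y) := div_pos (cosh_pos _) hcg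
  have hc1 : cosh (f y) / cosh (g y) < 1 := (div_lt_one hcg).2 (cosh_lt_cosh.2 hfg)
  have hs := sqrt_pos.2 (sinh_sq_sub_sinh_sq_pos hfg)
  refine ((hasDerivAt_arccos (by linarith) hc1.ne).comp y
    (hf.cosh.div hg.cosh hcg.ne')).congr_deriv ?_
  rw [sqrt_one_sub_sq_cosh_div_cosh]
  field_simp
  ring

lemma sinh_div_sinh_mul_strictMonoOn {u : ℝ} (hu0 : 0 < u) (hu1 : u < 1) :
    StrictMonoOn (fun ℓ => sinh ℓ / sinh (u * ℓ)) (Ioi 0) := by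
  have hderiv (ℓ : ℝ) (hℓ : 0 < ℓ) : HasDerivAt (fun ℓ => sinh ℓ / sinh (u * ℓ))
      ((cosh ℓ * sinh (u * ℓ) - sinh ℓ * (cosh (u * ℓ) * u)) / sinh (u * ℓ) ^ 2) ℓ :=
    (hasDerivAt_sinh ℓ).div ((hasDerivAt_const_mul u).sinh)
      (sinh_pos_iff.2 (mul_pos hu0 hℓ)).ne'
  refine strictMonoOn_of_hasDerivWithinAt_pos (convex_Ioi 0)
    (fun ℓ hℓ => (hderiv ℓ hℓ).continuousAt.continuousWithinAt)
    (fun ℓ hℓ => (hderiv ℓ (interior_subset hℓ)).hasDerivWithinAt) (fun ℓ hℓ => ?_)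
  rw [interior_Ioi, mem_Ioi] at hℓ
  have hkey := mul_sinh_mul_cosh_lt (mul_pos hu0 hℓ) (mul_lt_of_lt_one_left hℓ hu1)
  have := sinh_pos_iff.2 (mul_pos hu0 hℓ)
  apply div_pos _ (by positivity)
  nlinarith

lemma div_sqrt_sq_sub_sq_lt {a b a' b' : ℝ} (ha : 0 < a) (ha' : 0 < a') (hab' : a' < b')
    (h : a * b' < a' * b) : a / √(b ^ 2 - a ^ 2) < a' / √(b' ^ 2 - a' ^ 2) := by
  have hb : 0 < b := pos_of_mul_pos_right (h.trans' (mul_pos ha (ha'.trans hab'))) ha'.le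
  have hab : a < b := by nlinarith
  have hd : 0 < b ^ 2 - a ^ 2 := by nlinarith
  have hd' : 0 < b' ^ 2 - a' ^ 2 := by nlinarith
  rw [div_lt_div_iff₀ (sqrt_pos.2 hd) (sqrt_pos.2 hd')]
  apply lt_of_pow_lt_pow_left₀ 2 (by positivity)
  rw [mul_pow, mul_pow, sq_sqrt hd.le, sq_sqrt hd'.le]
  nlinarith [mul_pos ha (ha'.trans hab'), mul_pos ha' hb]

lemma sinh_mul_div_sqrt_strictAntiOn {u : ℝ} (hu0 : 0 < u) (hu1 : u < 1) :
    StrictAntiOn (fun ℓ => sinh (u * ℓ) / √(sinh ℓ ^ 2 - sinh (u * ℓ) ^ 2)) (Ioi 0) := by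
  intro ℓ₂ hℓ₂ ℓ₁ hℓ₁ hℓ
  have hratio := sinh_div_sinh_mul_strictMonoOn hu0 hu1 hℓ₂ hℓ₁ hℓ
  have hu₁ := sinh_pos_iff.2 (mul_pos hu0 hℓ₁)
  have hu₂ := sinh_pos_iff.2 (mul_pos hu0 hℓ₂)
  rw [div_lt_div_iff₀ hu₂ hu₁] at hratio
  exact div_sqrt_sq_sub_sq_lt hu₁ hu₂
    (sinh_lt_sinh.2 (mul_lt_of_lt_one_left (mem_Ioi.1 hℓ₂) hu1)) (by linarith)

lemma abs_mul_lt_abs {x ℓ : ℝ} (hx : |x| < 1) (hℓ : ℓ ≠ 0) : |x * ℓ| < |ℓ| := by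
  rw [abs_mul]
  exact mul_lt_of_lt_one_left (abs_pos.2 hℓ) hx

noncomputable def betaL (x ℓ : ℝ) : ℝ := (1 / ℓ) * arccos (cosh (x * ℓ) / cosh ℓ)

lemma β_eq_betaL (x t : ℝ) : β x t = betaL x (L t) := rfl

lemma hasDerivAt_betaL_left {x ℓ : ℝ} (hx : |x| < 1) (hℓ : ℓ ≠ 0) :
    HasDerivAt (fun x => betaL x ℓ) (-(sinh (x * ℓ) / √(sinh ℓ ^ 2 - sinh (x * ℓ) ^ 2))) x := by
  have hxℓ := abs_mul_lt_abs hx hℓ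
  have hs := sqrt_pos.2 (sinh_sq_sub_sinh_sq_pos hxℓ)
  have := cosh_pos ℓ
  refine ((hasDerivAt_arccos_cosh_div_cosh (hasDerivAt_mul_const ℓ) (hasDerivAt_const x ℓ)
    hxℓ).const_mul (1 / ℓ)).congr_deriv ?_
  field_simp
  ring

lemma hasDerivAt_betaL_right {x ℓ : ℝ} (hx : |x| < 1) (hℓ : ℓ ≠ 0) :
    HasDerivAt (betaL x)
      ((ℓ * ((cosh (x * ℓ) * sinh ℓ - sinh (x * ℓ) * cosh ℓ * x) /
          (cosh ℓ * √(sinh ℓ ^ 2 - sinh (x * ℓ) ^ 2))) - arccos (cosh (x * ℓ) / cosh ℓ)) / ℓ ^ 2)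
      ℓ := by
  have hxℓ := abs_mul_lt_abs hx hℓ
  have harccos := hasDerivAt_arccos_cosh_div_cosh (hasDerivAt_const_mul x) (hasDerivAt_id' ℓ) hxℓ
  refine (((hasDerivAt_const ℓ 1).fun_div (hasDerivAt_id' ℓ) hℓ).mul harccos).congr_deriv ?_
  field_simp
  ring

lemma betaL_strictAntiOn {x : ℝ} (hx0 : 0 ≤ x) (hx1 : x < 1) :
    StrictAntiOn (betaL x) (Ioi 0) := by
  have hx : |x| < 1 := by rwa [abs_of_nonneg hx0]
  refine strictAntiOn_of_hasDerivWithinAt_neg (convex_Ioi 0)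
    (fun ℓ hℓ => (hasDerivAt_betaL_right hx (mem_Ioi.1 hℓ).ne').continuousAt.continuousWithinAt)
    (fun ℓ hℓ => (hasDerivAt_betaL_right hx (mem_Ioi.1 (interior_subset hℓ)).ne').hasDerivWithinAt)
    (fun ℓ hℓ => ?_)
  rw [interior_Ioi, mem_Ioi] at hℓ
  have habs := abs_mul_lt_abs hx hℓ.ne'
  have hd := sinh_sq_sub_sinh_sq_pos habs
  set s := √(sinh ℓ ^ 2 - sinh (x * ℓ) ^ 2) with hs_def
  have hs : 0 < s := sqrt_pos.2 hd
  have hcℓ := cosh_pos ℓ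
  apply div_neg_of_neg_of_pos _ (by positivity)
  rw [sub_neg]
  calc ℓ * ((cosh (x * ℓ) * sinh ℓ - sinh (x * ℓ) * cosh ℓ * x) / (cosh ℓ * s))
        = (ℓ * cosh (x * ℓ) * sinh ℓ - x * ℓ * sinh (x * ℓ) * cosh ℓ) / s / cosh ℓ := by ring
    _ ≤ s ^ 2 / s / cosh ℓ := by
        gcongr
        rw [sq_sqrt hd.le]
        exact mul_cosh_mul_sinh_sub_le (mul_nonneg hx0 hℓ.le) (mul_le_of_le_one_left hℓ.le hx1.le)
    _ = sin (arccos (cosh (x * ℓ) / cosh ℓ)) := by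
        rw [sin_arccos, sqrt_one_sub_sq_cosh_div_cosh, ← hs_def]; field_simp
    _ < arccos (cosh (x * ℓ) / cosh ℓ) :=
        sin_lt (arccos_pos.2 ((div_lt_one hcℓ).2 (cosh_lt_cosh.2 habs)))

lemma betaL_sub_strictAntiOn {ℓ₁ ℓ₂ : ℝ} (hℓ₂ : 0 < ℓ₂) (hℓ : ℓ₂ < ℓ₁) :
    StrictAntiOn (fun x => betaL x ℓ₂ - betaL x ℓ₁) (Icc 0 1) := by
  have hℓ₁ : 0 < ℓ₁ := hℓ₂.trans hℓ
  refine strictAntiOn_of_hasDerivWithinAt_neg (convex_Icc 0 1) (by unfold betaL; fun_prop)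
    (f' := fun x => sinh (x * ℓ₁) / √(sinh ℓ₁ ^ 2 - sinh (x * ℓ₁) ^ 2) -
      sinh (x * ℓ₂) / √(sinh ℓ₂ ^ 2 - sinh (x * ℓ₂) ^ 2))
    (fun x hx => ?_) (fun x hx => ?_)
  · rw [interior_Icc] at hx
    have hx' : |x| < 1 := by rw [abs_of_pos hx.1]; exact hx.2
    exact (((hasDerivAt_betaL_left hx' hℓ₂.ne').sub
      (hasDerivAt_betaL_left hx' hℓ₁.ne')).congr_deriv (by ring)).hasDerivWithinAt
  · rw [interior_Icc] at hx
    have := sinh_mul_div_sqrt_strictAntiOn hx.1 hx.2 (mem_Ioi.2 hℓ₂) (mem_Ioi.2 hℓ₁) hℓ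
    simp only at this
    linarith

noncomputable def coshTwoL (t : ℝ) : ℝ :=
  (1 + 8 * t ^ 2 + 21 * t ^ 4 - 2 * t ^ 6) / (2 * t ^ 2 * (1 + t ^ 2) ^ 2)

lemma L_eq_half_arcosh (t : ℝ) : L t = 1 / 2 * Real.arcosh (coshTwoL t) := rfl

lemma one_lt_coshTwoL {t : ℝ} (ht : t ∈ Ioo 0 1) : 1 < coshTwoL t := by
  obtain ⟨ht0, ht1⟩ := ht
  rw [coshTwoL, one_lt_div (by positivity)]
  nlinarith [pow_pos ht0 2, pow_pos ht0 4, mul_pos (pow_pos ht0 4) (sub_pos.2 ht1)]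

lemma coshTwoL_strictAntiOn : StrictAntiOn coshTwoL (Ioi 0) := by
  intro t₁ ht₁ t₂ ht₂ ht
  rw [mem_Ioi] at ht₁ ht₂
  rw [coshTwoL, coshTwoL, div_lt_div_iff₀ (by positivity) (by positivity), ← sub_pos]
  have hsq : 0 < t₂ ^ 2 - t₁ ^ 2 := by nlinarith
  have hfactor : 0 < 2 * (1 + t₁ ^ 2) ^ 2 + t₂ ^ 2 * (4 * (1 - t₁ ^ 2) ^ 2 + 16 * t₁ ^ 4)
      + t₂ ^ 4 * (2 + 20 * t₁ ^ 2 + 50 * t₁ ^ 4) := by positivity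
  convert mul_pos hsq hfactor using 1
  ring

lemma L_pos {t : ℝ} (ht : t ∈ Ioo 0 1) : 0 < L t := by
  rw [L_eq_half_arcosh]
  have := arcosh_pos (one_lt_coshTwoL ht)
  positivity

lemma L_strictAntiOn : StrictAntiOn L (Ioo 0 1) := by
  intro t₁ ht₁ t₂ ht₂ ht
  rw [L_eq_half_arcosh, L_eq_half_arcosh]
  have hlt := coshTwoL_strictAntiOn ht₁.1 ht₂.1 ht
  have := (arcosh_lt_arcosh (zero_lt_one.trans (one_lt_coshTwoL ht₂))
    (zero_lt_one.trans (one_lt_coshTwoL ht₁))).2 hlt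
  linarith

theorem stmt_14 : ∀ t₁ ∈ Set.Ioo (0:ℝ) 1, ∀ t₂ ∈ Set.Ioo (0:ℝ) 1, t₁ < t₂ →
    ∀ x ∈ Set.Ioo (0:ℝ) 1,
      0 < β x t₂ - β x t₁ ∧ β x t₂ - β x t₁ < β 0 t₂ - β 0 t₁ := by
  intro t₁ ht₁ t₂ ht₂ ht x hx
  have hL : L t₂ < L t₁ := L_strictAntiOn ht₁ ht₂ ht
  have hL₂ : 0 < L t₂ := L_pos ht₂
  simp only [β_eq_betaL]
  exact ⟨sub_pos.2 (betaL_strictAntiOn hx.1.le hx.2 hL₂ (hL₂.trans hL) hL),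
    betaL_sub_strictAntiOn hL₂ hL (left_mem_Icc.2 zero_le_one) (Ioo_subset_Icc_self hx) hx.1⟩
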